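/- A pre-circumscription C is cumulative (satisfies both (CT) and (CM)) if and only if C is the KLM entailment defined by some smooth simplified KLM model, i.e., a smooth KLM model whose set of states is the set of all theories of L and whose labelling map l is the identity. -/
import Mathlib


/-- Formulas of a propositional language over variables `V`. -/
inductive Formula (V : Type) : Type
  | var : V → Formula V
  | neg : Formula V → Formula V
  | and : Formula V → Formula V → Formula V
  | or  : Formula V → Formula V → Formula V
  | imp : Formula V → Formula V → Formula V

/-- Classical satisfaction of a formula by an interpretation `μ ⊆ V`. -/
def Formula.Sat {V : Type} (μ : Set V) : Formula V → Prop
  | .var v => v ∈ μ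
  | .neg φ => ¬ Formula.Sat μ φ
  | .and φ ψ => Formula.Sat μ φ ∧ Formula.Sat μ ψ
  | .or φ ψ => Formula.Sat μ φ ∨ Formula.Sat μ ψ
  | .imp φ ψ => Formula.Sat μ φ → Formula.Sat μ ψ

/-- Classical consequence: every model of `T` satisfies `φ`. -/
def Entails {V : Type} (T : Set (Formula V)) (φ : Formula V) : Prop :=
  ∀ μ : Set V, (∀ ψ ∈ T, Formula.Sat μ ψ) → Formula.Sat μ φ

/-- `Th T` = set of classical consequences of `T`. -/
def Th {V : Type} (T : Set (Formula V)) : Set (Formula V) :=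
  {φ | Entails T φ}

/-- A theory is a deductively closed set of formulas. -/
def IsTheory {V : Type} (T : Set (Formula V)) : Prop :=
  Th T = T

/-- A pre-circumscription: values are theories, it is extensive,
and it respects full logical equivalence. -/
def IsPreCirc {V : Type} (f : Set (Formula V) → Set (Formula V)) : Prop :=
  (∀ T, IsTheory (f T)) ∧ (∀ T, T ⊆ f T) ∧
  (∀ T₁ T₂, Th T₁ = Th T₂ → f T₁ = f T₂)

/-- For a KLM model with labelling `l`, the set `S(T)` of states satisfying `T`. -/
def klmStates {V σ : Type} (l : σ → Set (Formula V)) (T : Set (Formula V)) : Set σ :=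
  {s | Th T ⊆ l s}

/-- The set `S_≺(T)` of `≺`-minimal states among those satisfying `T` (KLM model). -/
def klmMin {V σ : Type} (l : σ → Set (Formula V)) (prec : σ → σ → Prop)
    (T : Set (Formula V)) : Set σ :=
  {s | s ∈ klmStates l T ∧ ∀ s' ∈ klmStates l T, ¬ prec s' s}

/-- The KLM entailment defined by a KLM model `(σ, l, prec)`. -/
def CKLM {V σ : Type} (l : σ → Set (Formula V)) (prec : σ → σ → Prop)
    (T : Set (Formula V)) : Set (Formula V) :=
  {φ | ∀ s ∈ klmMin l prec T, φ ∈ l s}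

/-- Smoothness (stopperedness) of a KLM model. -/
def klmSmooth {V σ : Type} (l : σ → Set (Formula V)) (prec : σ → σ → Prop) : Prop :=
  ∀ T : Set (Formula V), ∀ s ∈ klmStates l T, s ∉ klmMin l prec T →
    ∃ s' ∈ klmMin l prec T, prec s' s

/-- For a MAK model with satisfaction relation `sat`, the set `S(T)` of states
satisfying every formula of `T`. -/
def makStates {V σ : Type} (sat : σ → Formula V → Prop) (T : Set (Formula V)) : Set σ :=
  {s | ∀ φ ∈ T, sat s φ}

/-- The set `S_≺(T)` of `≺`-minimal states among those satisfying `T` (MAK model). -/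
def makMin {V σ : Type} (sat : σ → Formula V → Prop) (prec : σ → σ → Prop)
    (T : Set (Formula V)) : Set σ :=
  {s | s ∈ makStates sat T ∧ ∀ s' ∈ makStates sat T, ¬ prec s' s}

/-- The MAK entailment defined by a MAK model `(σ, sat, prec)`. -/
def CMAK {V σ : Type} (sat : σ → Formula V → Prop) (prec : σ → σ → Prop)
    (T : Set (Formula V)) : Set (Formula V) :=
  {φ | ∀ s ∈ makMin sat prec T, sat s φ}

/-- The (monotonic) Tarski entailment `Cn_⊨` of a MAK model. -/
def Cn {V σ : Type} (sat : σ → Formula V → Prop) (T : Set (Formula V)) : Set (Formula V) :=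
  {φ | ∀ s ∈ makStates sat T, sat s φ}

/-- The set `Cn_⊨(s)` of formulas satisfied by a state `s` of a MAK model. -/
def CnState {V σ : Type} (sat : σ → Formula V → Prop) (s : σ) : Set (Formula V) :=
  {φ | sat s φ}

lemma subset_Th' {V : Type} (T : Set (Formula V)) : T ⊆ Th T :=
  fun φ hφ μ hμ => hμ φ hφ

lemma Th_mono' {V : Type} {A B : Set (Formula V)} (h : A ⊆ B) : Th A ⊆ Th B :=
  fun φ hφ μ hμ => hφ μ (fun ψ hψ => hμ ψ (h hψ))

/-- A pre-circumscription is cumulative (satisfies (CT) and (CM)) iff it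
is the KLM entailment defined by some smooth simplified KLM model (states are all
theories, labelling is the identity). -/
theorem cumulative_iff_smooth_simplified_klm {V : Type}
    (C : Set (Formula V) → Set (Formula V)) (hC : IsPreCirc C) :
    ((∀ T T' : Set (Formula V), T' ⊆ C T → C (T ∪ T') ⊆ C T) ∧
     (∀ T T' : Set (Formula V), T' ⊆ C T → C T ⊆ C (T ∪ T'))) ↔
    ∃ prec : {T : Set (Formula V) // IsTheory T} → {T : Set (Formula V) // IsTheory T} → Prop,
      klmSmooth (fun s => s.val) prec ∧
      ∀ T : Set (Formula V), CKLM (fun s => s.val) prec T = C T := by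
  obtain ⟨hThy, hExt, _⟩ := hC
  constructor
  · rintro ⟨hCT, hCM⟩
    -- the state ⟨C T⟩ as an element of the subtype
    refine ⟨fun A B => (∃ U, A.val = C U ∧ Th U ⊆ B.val) ∧ A ≠ B, ?_, ?_⟩
    -- key facts
    all_goals {
      have hThCT : ∀ T : Set (Formula V), Th T ⊆ C T := by
        intro T
        have : Th T ⊆ Th (C T) := Th_mono' (hExt T)
        rwa [hThy T] at this
      -- if Th U ⊆ C T and Th T ⊆ C U then C U = C T
      have key : ∀ T U : Set (Formula V), Th U ⊆ C T → Th T ⊆ C U → C U = C T := by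
        intro T U hUT hTU
        have h1 : C (T ∪ U) = C T := by
          have hU : U ⊆ C T := (subset_Th' U).trans hUT
          exact Set.Subset.antisymm (hCT T U hU) (hCM T U hU)
        have h2 : C (U ∪ T) = C U := by
          have hT : T ⊆ C U := (subset_Th' T).trans hTU
          exact Set.Subset.antisymm (hCT U T hT) (hCM U T hT)
        rw [Set.union_comm] at h1
        rw [h1] at h2; exact h2.symm
      -- minimal states of S(T) = {⟨C T⟩}
      have hmin : ∀ T : Set (Formula V),
          klmMin (V := V) (σ := {T : Set (Formula V) // IsTheory T}) (fun s => s.val)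
            (fun A B => (∃ U, A.val = C U ∧ Th U ⊆ B.val) ∧ A ≠ B) T
            = {⟨C T, hThy T⟩} := by
        intro T
        ext s
        constructor
        · rintro ⟨hs, hmin⟩
          by_contra hne
          exact hmin ⟨C T, hThy T⟩ (hThCT T) ⟨⟨T, rfl, hs⟩, fun h => hne (h ▸ rfl)⟩
        · rintro rfl
          refine ⟨hThCT T, ?_⟩
          rintro s' hs' ⟨⟨U, hU, hUT⟩, hne⟩
          apply hne
          ext1
          rw [hU]
          exact key T U hUT (hU ▸ hs')
      first
      | -- smoothness
        (intro T s hs hnot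
         refine ⟨⟨C T, hThy T⟩, ?_, ⟨T, rfl, hs⟩, ?_⟩
         · rw [hmin T]; rfl
         · intro h; rw [hmin T] at hnot; exact hnot (h ▸ rfl))
      | -- CKLM = C
        (intro T
         ext φ
         simp only [CKLM, Set.mem_setOf_eq, hmin T, Set.mem_singleton_iff]
         constructor
         · intro h; exact h ⟨C T, hThy T⟩ rfl
         · rintro h s rfl; exact h)
    }
  · rintro ⟨prec, hsmooth, hCeq⟩
    have hminsub : ∀ T T' : Set (Formula V), T' ⊆ C T →
        klmMin (fun s : {T : Set (Formula V) // IsTheory T} => s.val) prec T ⊆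
          klmStates (fun s => s.val) (T ∪ T') := by
      intro T T' hT' s hs
      have hs1 : Th T ⊆ s.val := hs.1
      have hT'sub : T' ⊆ s.val := by
        intro φ hφ
        rw [← hCeq T] at hT'
        exact hT' hφ s hs
      have hun : T ∪ T' ⊆ s.val :=
        Set.union_subset ((subset_Th' T).trans hs1) hT'sub
      have : Th (T ∪ T') ⊆ Th s.val := Th_mono' hun
      rwa [s.property] at this
    have hstsub : ∀ T T' : Set (Formula V),
        klmStates (fun s : {T : Set (Formula V) // IsTheory T} => s.val) (T ∪ T') ⊆
          klmStates (fun s => s.val) T := by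
      intro T T' s hs
      exact (Th_mono' Set.subset_union_left).trans hs
    have hmineq : ∀ T T' : Set (Formula V), T' ⊆ C T →
        klmMin (fun s : {T : Set (Formula V) // IsTheory T} => s.val) prec T =
          klmMin (fun s => s.val) prec (T ∪ T') := by
      intro T T' hT'
      apply Set.Subset.antisymm
      · intro s hs
        exact ⟨hminsub T T' hT' hs, fun s' hs' => hs.2 s' (hstsub T T' hs')⟩
      · intro s hs
        by_contra hnot
        obtain ⟨s', hs'min, hprec⟩ := hsmooth T s (hstsub T T' hs.1) hnot
        exact hs.2 s' (hminsub T T' hT' hs'min) hprec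
    constructor
    · intro T T' hT' φ hφ
      rw [← hCeq T]
      rw [← hCeq (T ∪ T')] at hφ
      intro s hs
      exact hφ s ((hmineq T T' hT') ▸ hs)
    · intro T T' hT' φ hφ
      rw [← hCeq (T ∪ T')]
      rw [← hCeq T] at hφ
      intro s hs
      exact hφ s ((hmineq T T' hT').symm ▸ hs)
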